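/- arXiv:math/0401194 — 7 statements merged into one kernel-verified Lean document; each statement's English description precedes it below -/
import Mathlib

section
/- For the annulus with both scatterers rotating, the angular momentum N and tangential energy E are integrals of motion. Precisely: let η₁, η₂ > 0 and 0 < R < 1. Define the outer collision map A(v_t, ω₁, ω₂) = (v_t − (2η₂/(1+η₂))(v_t − ω₂), ω₁, ω₂ + (2/(1+η₂))(v_t − ω₂)) and the inner collision map B(v_t, ω₁, ω₂) = (v_t − (2η₁/(1+η₁))(v_t − R²ω₁), ω₁ + (2/(R²(1+η₁)))(v_t − R²ω₁), ω₂). Then the functions N(v_t, ω₁, ω₂) = v_t + η₁R²ω₁ + η₂ω₂ and E(v_t, ω₁, ω₂) = v_t² + η₁R⁴ω₁² + η₂ω₂² are invariant under both A and B. -/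
/-- For the annulus with both scatterers rotating, the angular momentum `N`
and the tangential energy `E` are invariant under both the outer collision
map `A` and the inner collision map `B`. -/
theorem annulus_two_rotors_integrals (η₁ η₂ R : ℝ)
    (hη₁ : 0 < η₁) (hη₂ : 0 < η₂) (hR0 : 0 < R) (hR1 : R < 1)
    (A B : ℝ × ℝ × ℝ → ℝ × ℝ × ℝ)
    (hA : ∀ vt ω₁ ω₂ : ℝ, A (vt, ω₁, ω₂) =
      (vt - (2 * η₂ / (1 + η₂)) * (vt - ω₂), ω₁,
        ω₂ + (2 / (1 + η₂)) * (vt - ω₂)))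
    (hB : ∀ vt ω₁ ω₂ : ℝ, B (vt, ω₁, ω₂) =
      (vt - (2 * η₁ / (1 + η₁)) * (vt - R ^ 2 * ω₁),
        ω₁ + (2 / (R ^ 2 * (1 + η₁))) * (vt - R ^ 2 * ω₁), ω₂))
    (N E : ℝ × ℝ × ℝ → ℝ)
    (hN : ∀ p : ℝ × ℝ × ℝ, N p = p.1 + η₁ * R ^ 2 * p.2.1 + η₂ * p.2.2)
    (hE : ∀ p : ℝ × ℝ × ℝ, E p = p.1 ^ 2 + η₁ * R ^ 4 * p.2.1 ^ 2 + η₂ * p.2.2 ^ 2) :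
    (∀ p, N (A p) = N p) ∧ (∀ p, E (A p) = E p) ∧
    (∀ p, N (B p) = N p) ∧ (∀ p, E (B p) = E p) := by
  have h2 : (1 + η₂) ≠ 0 := by linarith
  have h1 : (1 + η₁) ≠ 0 := by linarith
  have hR : R ^ 2 ≠ 0 := pow_ne_zero _ hR0.ne'
  refine ⟨fun p => ?_, fun p => ?_, fun p => ?_, fun p => ?_⟩ <;>
    obtain ⟨vt, ω₁, ω₂⟩ := p <;>
    simp only [hA, hB, hN, hE] <;> field_simp <;> ring
end

section
/- The angle γ/2 between the two reflection lines governing inner and outer rotor collisions on the velocity circle satisfies cos(γ/2) = ((1 + η₁⁻¹)(1 + η₂⁻¹))^{−1/2}. Precisely: for η₁, η₂ > 0, the vectors u = (−(1+η₂)/√η₁, √η₂, 1) and v = (√η₁, −(1+η₁)/√η₂, 1) in ℝ³ satisfy |⟪u, v⟫| / (‖u‖·‖v‖) = ((1 + η₁⁻¹)(1 + η₂⁻¹))^{−1/2}, where ⟪·,·⟫ is the standard inner product and ‖·‖ the Euclidean norm. -/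
/-! The factor `1 + η₁ + η₂ = -⟪u, v⟫` divides both `η₁ ‖u‖²` and `η₂ ‖v‖²`, so
`‖u‖² ‖v‖² = ⟪u, v⟫² (1 + η₁⁻¹) (1 + η₂⁻¹)`, which is the squared claim. -/

open RealInnerProductSpace

namespace EuclideanSpace

variable {x y : EuclideanSpace ℝ (Fin 3)} {a₀ a₁ a₂ b₀ b₁ b₂ : ℝ}

theorem real_inner_of_ofLp_eq_vec3 (hx : x.ofLp = ![a₀, a₁, a₂]) (hy : y.ofLp = ![b₀, b₁, b₂]) :
    ⟪x, y⟫ = a₀ * b₀ + a₁ * b₁ + a₂ * b₂ := by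
  rw [inner_eq_star_dotProduct, hx, hy, star_trivial, Matrix.vec3_dotProduct']
  ring

theorem real_norm_sq_of_ofLp_eq_vec3 (hx : x.ofLp = ![a₀, a₁, a₂]) :
    ‖x‖ ^ 2 = a₀ ^ 2 + a₁ ^ 2 + a₂ ^ 2 := by
  rw [← real_inner_self_eq_norm_sq, real_inner_of_ofLp_eq_vec3 hx hx]
  ring

end EuclideanSpace

theorem abs_real_inner_div_norm_mul_norm_eq_rpow_of_sq {E : Type*} [NormedAddCommGroup E]
    [InnerProductSpace ℝ E] {u v : E} {P : ℝ} (hP : 0 ≤ P) (huv : ⟪u, v⟫ ≠ 0)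
    (h : ‖u‖ ^ 2 * ‖v‖ ^ 2 = ⟪u, v⟫ ^ 2 * P) :
    |⟪u, v⟫| / (‖u‖ * ‖v‖) = P ^ (-(1 / 2) : ℝ) := by
  have hnorm : ‖u‖ * ‖v‖ = |⟪u, v⟫| * √P := by
    rw [← Real.sqrt_sq (by positivity : 0 ≤ ‖u‖ * ‖v‖), mul_pow, h, Real.sqrt_mul' _ hP,
      Real.sqrt_sq_eq_abs]
  rw [hnorm, div_mul_cancel_left₀ (abs_ne_zero.mpr huv), Real.sqrt_eq_rpow, ← Real.rpow_neg hP]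

/-- The angle `γ/2` between the two reflection lines on the velocity circle
satisfies `cos (γ/2) = ((1 + η₁⁻¹)(1 + η₂⁻¹))^(-1/2)`. -/
theorem angle_between_reflection_lines (η₁ η₂ : ℝ) (hη₁ : 0 < η₁) (hη₂ : 0 < η₂)
    (u v : EuclideanSpace ℝ (Fin 3))
    (hu : u = ![-(1 + η₂) / Real.sqrt η₁, Real.sqrt η₂, 1])
    (hv : v = ![Real.sqrt η₁, -(1 + η₁) / Real.sqrt η₂, 1]) :
    |⟪u, v⟫| / (‖u‖ * ‖v‖) = ((1 + η₁⁻¹) * (1 + η₂⁻¹)) ^ (-(1 / 2) : ℝ) := by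
  have hs₁ : Real.sqrt η₁ ^ 2 = η₁ := Real.sq_sqrt hη₁.le
  have hs₂ : Real.sqrt η₂ ^ 2 = η₂ := Real.sq_sqrt hη₂.le
  have hinner : ⟪u, v⟫ = -(1 + η₁ + η₂) := by
    rw [EuclideanSpace.real_inner_of_ofLp_eq_vec3 hu hv]
    field_simp
    ring
  have hu₂ : ‖u‖ ^ 2 = (1 + η₂) * (1 + η₁ + η₂) / η₁ := by
    rw [EuclideanSpace.real_norm_sq_of_ofLp_eq_vec3 hu]
    field_simp
    rw [hs₁, hs₂]
    ring
  have hv₂ : ‖v‖ ^ 2 = (1 + η₁) * (1 + η₁ + η₂) / η₂ := by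
    rw [EuclideanSpace.real_norm_sq_of_ofLp_eq_vec3 hv]
    field_simp
    rw [hs₁, hs₂]
    ring
  refine abs_real_inner_div_norm_mul_norm_eq_rpow_of_sq (by positivity)
    (by rw [hinner]; linarith) ?_
  rw [hu₂, hv₂, hinner]
  field_simp
  ring
end

section
/- There is an open set of integrals of motion for which the set U is empty, i.e., the dynamics is alternating. Precisely: let 0 < R < 1, E > 0, and F ∈ ℝ with F > (2/R² − 1)E. Then for all x, y, z, w ∈ ℝ satisfying x² + y² + z² = E and x²/R² + y² + z² + w² = F, one has z² < (R²/(1−R²)) w². -/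
/-!
Eliminating `y` between the two integrals of motion gives
`R² w² = R² (F - E) - (1 - R²) x²`, so `(1 - R²) z² < R² w²` reduces to
`(1 - R²) (x² + z²) < R² (F - E)`. Since `x² + z² ≤ E`, this holds as soon as `E / R² < F`,
which the hypothesis `(2 / R² - 1) E < F` implies because `1 / R² ≤ 2 / R² - 1` when `R² ≤ 1`.
-/

lemma sq_mul_sq_eq_of_integrals {R E F x y z w : ℝ} (hR : R ≠ 0)
    (hE : x ^ 2 + y ^ 2 + z ^ 2 = E) (hF : x ^ 2 / R ^ 2 + y ^ 2 + z ^ 2 + w ^ 2 = F) :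
    R ^ 2 * w ^ 2 = R ^ 2 * (F - E) - (1 - R ^ 2) * x ^ 2 := by
  subst hE hF
  field_simp
  ring

lemma div_sq_lt_of_two_div_sq_sub_one_mul_lt {R E F : ℝ} (hR0 : R ≠ 0) (hR1 : R ^ 2 ≤ 1)
    (hE : 0 ≤ E) (hF : (2 / R ^ 2 - 1) * E < F) : E / R ^ 2 < F := by
  have hR2 : 0 < R ^ 2 := by positivity
  have h_inv : 1 / R ^ 2 ≤ 2 / R ^ 2 - 1 := by
    rw [sub_eq_add_neg, le_add_neg_iff_add_le, div_add_one hR2.ne', div_le_div_iff_of_pos_right hR2]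
    linarith
  calc E / R ^ 2 = 1 / R ^ 2 * E := by ring
    _ ≤ (2 / R ^ 2 - 1) * E := mul_le_mul_of_nonneg_right h_inv hE
    _ < F := hF

lemma sq_lt_div_one_sub_sq_mul_sq_of_div_sq_lt {R E F x y z w : ℝ} (hR0 : R ≠ 0)
    (hR1 : R ^ 2 < 1) (hEF : E / R ^ 2 < F)
    (hE : x ^ 2 + y ^ 2 + z ^ 2 = E) (hF : x ^ 2 / R ^ 2 + y ^ 2 + z ^ 2 + w ^ 2 = F) :
    z ^ 2 < (R ^ 2 / (1 - R ^ 2)) * w ^ 2 := by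
  have hR2 : 0 < R ^ 2 := by positivity
  have h1R2 : 0 < 1 - R ^ 2 := sub_pos.mpr hR1
  have hE_lt : E < R ^ 2 * F := by rwa [div_lt_iff₀' hR2] at hEF
  have hxz : x ^ 2 + z ^ 2 ≤ E := by nlinarith [sq_nonneg y]
  have h_scaled := mul_le_mul_of_nonneg_left hxz h1R2.le
  rw [div_mul_eq_mul_div, lt_div_iff₀ h1R2, sq_mul_sq_eq_of_integrals hR0 hE hF]
  linarith

theorem alternating_case_open_set_general (R E F : ℝ) (hR0 : 0 < R) (hR1 : R < 1)
    (hF : (2 / R ^ 2 - 1) * E < F) :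
    ∀ x y z w : ℝ, x ^ 2 + y ^ 2 + z ^ 2 = E →
      x ^ 2 / R ^ 2 + y ^ 2 + z ^ 2 + w ^ 2 = F →
      z ^ 2 < (R ^ 2 / (1 - R ^ 2)) * w ^ 2 := by
  intro x y z w h1 h2
  have hE : 0 ≤ E := h1 ▸ by positivity
  have hR_sq : R ^ 2 < 1 := pow_lt_one₀ hR0.le hR1 two_ne_zero
  exact sq_lt_div_one_sub_sq_mul_sq_of_div_sq_lt hR0.ne' hR_sq
    (div_sq_lt_of_two_div_sq_sub_one_mul_lt hR0.ne' hR_sq.le hE hF) h1 h2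

/-- There is an open set of integrals of motion (`F > (2/R² − 1) E`) for which
the set `U` is empty, i.e. the dynamics is alternating. -/
theorem alternating_case_open_set (R E F : ℝ) (hR0 : 0 < R) (hR1 : R < 1)
    (hE : 0 < E) (hF : (2 / R ^ 2 - 1) * E < F) :
    ∀ x y z w : ℝ, x ^ 2 + y ^ 2 + z ^ 2 = E →
      x ^ 2 / R ^ 2 + y ^ 2 + z ^ 2 + w ^ 2 = F →
      z ^ 2 < (R ^ 2 / (1 - R ^ 2)) * w ^ 2 :=
  alternating_case_open_set_general R E F hR0 hR1 hF
end

section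
/- In the alternating irrational case the base dynamics is minimal. Precisely: let γ ∈ ℝ be irrational and let T be the map on (ℝ/ℤ) × {0,1} defined by T(s, 0) = (−s, 1) and T(s, 1) = (−s − γ, 0). Then T is minimal: for every point (s, i), the forward orbit {Tⁿ(s, i) : n ∈ ℕ} is dense in (ℝ/ℤ) × {0,1}. -/
/-!
Since the two reflections alternate, `T²` acts on each of the two circles as a rotation, by `γ` on
circle `1` and by `-γ` on circle `0`. Irrational rotations have dense forward orbits, and every
forward orbit of `T` visits both circles, so its trace on each circle contains a dense rotation
orbit.
-/

open Set

variable {X ι : Type*}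

theorem AddCircle.denseRange_nsmul_coe {p a : ℝ} [Fact (0 < p)] (h : Irrational (a / p)) :
    DenseRange (· • (a : AddCircle p) : ℕ → AddCircle p) :=
  denseRange_zsmul_iff_nsmul.mp (denseRange_zsmul_coe_iff.mpr h)

theorem DenseRange.const_add_nsmul [AddGroup X] [TopologicalSpace X] [ContinuousAdd X] {d : X}
    (hd : DenseRange (· • d : ℕ → X)) (t : X) : DenseRange fun k : ℕ => t + k • d :=
  (add_left_surjective t).denseRange.comp hd (continuous_const_add t)

theorem dense_of_forall_dense_fiber [TopologicalSpace X] [TopologicalSpace ι] [DiscreteTopology ι]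
    {S : Set (X × ι)} (h : ∀ j, Dense {u | (u, j) ∈ S}) : Dense S := by
  rintro ⟨u, j⟩
  have hu : (u, j) ∈ closure ({u | (u, j) ∈ S} ×ˢ {j}) := by
    rw [closure_prod_eq]
    exact ⟨h j u, subset_closure rfl⟩
  refine closure_mono ?_ hu
  rintro ⟨v, _⟩ ⟨hv, rfl⟩
  exact hv

theorem iterate_two_mul_apply_of_sq_eq_add [AddMonoid X] {T : X × ι → X × ι} {i : ι} {d : X}
    (h : ∀ u, T (T (u, i)) = (u + d, i)) (k : ℕ) (u : X) :
    T^[2 * k] (u, i) = (u + k • d, i) := by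
  have hconj : Function.Semiconj (·, i) (· + d) T^[2] := fun u => (h u).symm
  rw [Function.iterate_mul, ← hconj.iterate_right k u, add_right_iterate_apply]

theorem dense_fiber_range_iterate [AddGroup X] [TopologicalSpace X] [ContinuousAdd X]
    {T : X × ι → X × ι} {i : ι} {d : X} (h : ∀ u, T (T (u, i)) = (u + d, i))
    (hd : DenseRange (· • d : ℕ → X)) {x : X × ι} {t : X}
    (ht : (t, i) ∈ range fun n => T^[n] x) :
    Dense {u | (u, i) ∈ range fun n => T^[n] x} := by
  obtain ⟨m, hm : T^[m] x = (t, i)⟩ := ht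
  refine Dense.mono ?_ (hd.const_add_nsmul t)
  rintro _ ⟨k, rfl⟩
  refine ⟨2 * k + m, ?_⟩
  dsimp only
  rw [Function.iterate_add_apply, hm, iterate_two_mul_apply_of_sq_eq_add h]

/-- In the alternating irrational case the base dynamics is minimal: every
forward orbit of the map `T(s,0) = (-s,1)`, `T(s,1) = (-s-γ,0)` on
`(ℝ/ℤ) × {0,1}` is dense. -/
theorem alternating_irrational_minimal (γ : ℝ) (hγ : Irrational γ)
    (T : AddCircle (1 : ℝ) × Fin 2 → AddCircle (1 : ℝ) × Fin 2)
    (hT0 : ∀ s : AddCircle (1 : ℝ), T (s, 0) = (-s, 1))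
    (hT1 : ∀ s : AddCircle (1 : ℝ), T (s, 1) = (-s - (γ : AddCircle (1 : ℝ)), 0)) :
    ∀ x : AddCircle (1 : ℝ) × Fin 2,
      Dense (Set.range fun n : ℕ => T^[n] x) := by
  have hsq0 : ∀ u, T (T (u, 0)) = (u + -(γ : AddCircle (1 : ℝ)), 0) := fun u => by
    rw [hT0, hT1, neg_neg, sub_eq_add_neg]
  have hsq1 : ∀ u, T (T (u, 1)) = (u + (γ : AddCircle (1 : ℝ)), 1) := fun u => by
    rw [hT1, hT0, neg_sub, sub_neg_eq_add, add_comm]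
  have hrot : DenseRange (· • (γ : AddCircle (1 : ℝ)) : ℕ → AddCircle (1 : ℝ)) :=
    AddCircle.denseRange_nsmul_coe (by rwa [div_one])
  have hrot_neg : DenseRange (· • -(γ : AddCircle (1 : ℝ)) : ℕ → AddCircle (1 : ℝ)) :=
    AddCircle.denseRange_nsmul_coe (a := -γ) (by rwa [div_one, irrational_neg_iff])
  rintro ⟨s, i⟩
  have hx : (s, i) ∈ range fun n => T^[n] (s, i) := ⟨0, rfl⟩
  have hTx : T (s, i) ∈ range fun n => T^[n] (s, i) := ⟨1, rfl⟩
  refine dense_of_forall_dense_fiber fun j => ?_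
  fin_cases i <;> fin_cases j
  · exact dense_fiber_range_iterate hsq0 hrot_neg hx
  · exact dense_fiber_range_iterate hsq1 hrot (hT0 s ▸ hTx)
  · exact dense_fiber_range_iterate hsq0 hrot_neg (hT1 s ▸ hTx)
  · exact dense_fiber_range_iterate hsq1 hrot hx
end

section
/- The deflection angle function is strictly monotone and bounded by arccos R. Precisely: let 0 < R < 1 and define β̂(β) = arcsin(sin β / R) − β for β ∈ [−arcsin R, arcsin R]. Then β̂ is strictly increasing on [−arcsin R, arcsin R], and |β̂(β)| ≤ arccos R for all β in this interval. -/
/-!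
Differentiating, `β̂'(β) = cos β / √(R² - sin² β) - 1`, which is positive because
`R² - sin² β < 1 - sin² β = cos² β`. Hence `β̂` is strictly increasing, and since it is odd
with `β̂(arcsin R) = arcsin 1 - arcsin R = arccos R`, its values lie in `[-arccos R, arccos R]`.
-/

open Real Set

/-- The angular advance `β̂` along the outer circle of a chord leaving it at angle `β`. -/
noncomputable def deflectionAngle (R β : ℝ) : ℝ := arcsin (sin β / R) - β

variable {R β : ℝ}

theorem deflectionAngle_neg (R β : ℝ) : deflectionAngle R (-β) = -deflectionAngle R β := by
  simp only [deflectionAngle, sin_neg, neg_div, arcsin_neg]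
  ring

theorem deflectionAngle_arcsin (hR0 : 0 < R) (hR1 : R ≤ 1) :
    deflectionAngle R (arcsin R) = arccos R := by
  rw [deflectionAngle, sin_arcsin (by linarith) hR1, div_self hR0.ne', arcsin_one,
    arccos_eq_pi_div_two_sub_arcsin]

theorem continuous_deflectionAngle (R : ℝ) : Continuous (deflectionAngle R) :=
  (continuous_arcsin.comp (continuous_sin.div_const R)).sub continuous_id

theorem abs_sin_lt_of_mem_Ioo_arcsin (hR1 : R ≤ 1) (hβ : β ∈ Ioo (-arcsin R) (arcsin R)) :
    |sin β| < R := by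
  have hR0 : 0 < R := arcsin_pos.1 (by linarith [hβ.1, hβ.2])
  have hsin : sin (arcsin R) = R := sin_arcsin (by linarith) hR1
  obtain ⟨hβ₁, hβ₂⟩ := hβ
  have hup := arcsin_le_pi_div_two R
  refine abs_lt.2 ⟨?_, ?_⟩
  · simpa only [sin_neg, hsin] using
      sin_lt_sin_of_lt_of_le_pi_div_two (by linarith) (by linarith) hβ₁
  · simpa only [hsin] using sin_lt_sin_of_lt_of_le_pi_div_two (by linarith) hup hβ₂

theorem hasDerivAt_deflectionAngle (hβ : |sin β| < R) :
    HasDerivAt (deflectionAngle R) (cos β / R * (1 / √(1 - (sin β / R) ^ 2)) - 1) β := by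
  have hR0 : 0 < R := (abs_nonneg _).trans_lt hβ
  have hx : |sin β / R| < 1 := by rwa [abs_div, abs_of_pos hR0, div_lt_one hR0]
  have harcsin := hasDerivAt_arcsin (abs_lt.1 hx).1.ne' (abs_lt.1 hx).2.ne
  rw [mul_comm]
  exact (harcsin.comp β ((hasDerivAt_sin β).div_const R)).sub (hasDerivAt_id β)

/-- Squared, this is `R² - sin² β < cos² β = 1 - sin² β`. -/
theorem sqrt_one_sub_sin_div_sq_lt (hR1 : R < 1) (hβ : |sin β| < R) (hcos : 0 < cos β) :
    √(1 - (sin β / R) ^ 2) < cos β / R := by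
  have hR0 : 0 < R := (abs_nonneg _).trans_lt hβ
  rw [sqrt_lt' (div_pos hcos hR0), div_pow, div_pow, sub_lt_iff_lt_add, ← add_div,
    one_lt_div (by positivity)]
  nlinarith [sin_sq_add_cos_sq β]

theorem strictMonoOn_deflectionAngle (hR1 : R < 1) :
    StrictMonoOn (deflectionAngle R) (Icc (-arcsin R) (arcsin R)) := by
  refine strictMonoOn_of_deriv_pos (convex_Icc _ _)
    (continuous_deflectionAngle R).continuousOn fun β hβ => ?_
  rw [interior_Icc] at hβ
  have hsin := abs_sin_lt_of_mem_Ioo_arcsin hR1.le hβ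
  have hR0 : 0 < R := (abs_nonneg _).trans_lt hsin
  have hcos : 0 < cos β := cos_pos_of_mem_Ioo
    ⟨by linarith [hβ.1, arcsin_lt_pi_div_two.2 hR1], hβ.2.trans (arcsin_lt_pi_div_two.2 hR1)⟩
  have hsqrt := sqrt_one_sub_sin_div_sq_lt hR1 hsin hcos
  have hpos : 0 < √(1 - (sin β / R) ^ 2) := sqrt_pos.2 (by
    rw [sub_pos, sq_lt_one_iff_abs_lt_one, abs_div, abs_of_pos hR0, div_lt_one hR0]
    exact hsin)
  rw [(hasDerivAt_deflectionAngle hsin).deriv, mul_one_div, sub_pos, one_lt_div hpos]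
  exact hsqrt

/-- The deflection angle function `β̂(β) = arcsin (sin β / R) − β` is strictly
increasing on `[−arcsin R, arcsin R]` and bounded in absolute value by
`arccos R` there. -/
theorem deflection_angle_monotone_bounded (R : ℝ) (hR0 : 0 < R) (hR1 : R < 1) :
    StrictMonoOn (fun β : ℝ => Real.arcsin (Real.sin β / R) - β)
      (Set.Icc (-Real.arcsin R) (Real.arcsin R)) ∧
    ∀ β ∈ Set.Icc (-Real.arcsin R) (Real.arcsin R),
      |Real.arcsin (Real.sin β / R) - β| ≤ Real.arccos R := by
  have hmono : StrictMonoOn (deflectionAngle R) (Icc (-arcsin R) (arcsin R)) :=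
    strictMonoOn_deflectionAngle hR1
  have hnonneg : 0 ≤ arcsin R := arcsin_nonneg.2 hR0.le
  refine ⟨hmono, fun β hβ => abs_le.2 ⟨?_, ?_⟩⟩
  · rw [← deflectionAngle_arcsin hR0 hR1.le, ← deflectionAngle_neg]
    exact hmono.monotoneOn ⟨le_rfl, by linarith⟩ hβ hβ.1
  · rw [← deflectionAngle_arcsin hR0 hR1.le]
    exact hmono.monotoneOn hβ ⟨by linarith, le_rfl⟩ hβ.2
end

section
/- The mean rotation number α depends strictly monotonically on the full energy F. Precisely: let 0 < R < 1, let z, g : ℝ/ℤ → ℝ be continuous with z(s) > 0 for all s, and let F₀ ∈ ℝ be such that F₀ − g(s) > ((1−R²)/R²) z(s)² for all s. For F ≥ F₀ define w_F(s) = √(F − g(s)), β_F(s) = arctan(z(s)/w_F(s)), and α(F) = 2∫_{ℝ/ℤ} (arcsin(sin β_F(s) / R) − β_F(s)) ds. Then α is strictly decreasing on [F₀, ∞). -/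
/-!
The integrand is `β̂ (β_F (s))` with `β̂ β = arcsin (sin β / R) - β`. Raising `F` strictly raises
`w_F (s)`, hence strictly lowers the angle `β_F (s) = arctan (z (s) / w_F (s))`, and the condition
on `F₀` keeps that angle in `[0, arcsin R]`. There `β̂` is strictly increasing, since
`β̂' β = cos β / √(R² - sin² β) - 1 > 0` for `R < 1`. So the integrand drops strictly at every
point of the circle, and so does its integral.
-/

open Real Set MeasureTheory

noncomputable def betaHat (R β : ℝ) : ℝ := arcsin (sin β / R) - β

lemma continuous_betaHat (R : ℝ) : Continuous (betaHat R) := by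
  unfold betaHat
  fun_prop

lemma hasDerivAt_betaHat {R β : ℝ} (h₁ : sin β / R ≠ -1) (h₂ : sin β / R ≠ 1) :
    HasDerivAt (betaHat R) (1 / √(1 - (sin β / R) ^ 2) * (cos β / R) - 1) β := by
  have := ((hasDerivAt_arcsin h₁ h₂).comp β ((hasDerivAt_sin β).div_const R)).sub (hasDerivAt_id β)
  exact this

lemma strictMonoOn_betaHat {R : ℝ} (hR0 : 0 < R) (hR1 : R < 1) :
    StrictMonoOn (betaHat R) (Icc 0 (arcsin R)) := by
  refine strictMonoOn_of_deriv_pos (convex_Icc _ _) (continuous_betaHat R).continuousOn ?_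
  intro β hβ
  rw [interior_Icc] at hβ
  obtain ⟨hβ0, hβR⟩ := hβ
  have hβπ : β < π / 2 := hβR.trans_le (arcsin_le_pi_div_two R)
  have hsin_pos : 0 < sin β := sin_pos_of_pos_of_lt_pi hβ0 (by linarith [pi_pos])
  have hcos_pos : 0 < cos β := cos_pos_of_mem_Ioo ⟨by linarith, hβπ⟩
  have hsin_lt : sin β < R := (lt_arcsin_iff_sin_lt' ⟨by linarith, hβπ⟩).1 hβR
  have hratio_lt : sin β / R < 1 := (div_lt_one hR0).2 hsin_lt
  have hratio_pos : 0 < sin β / R := div_pos hsin_pos hR0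
  rw [(hasDerivAt_betaHat (by linarith) hratio_lt.ne).deriv]
  set A := √(1 - (sin β / R) ^ 2)
  have hA : 0 < A := sqrt_pos.2 (by nlinarith)
  -- `R * A = √(R² - sin² β) < √(1 - sin² β) = cos β`
  have hRA : R * A < cos β := by
    rw [← sqrt_sq hR0.le, ← sqrt_mul (sq_nonneg R), sqrt_lt' hcos_pos]
    have hexpand : R ^ 2 * (1 - (sin β / R) ^ 2) = R ^ 2 - sin β ^ 2 := by field_simp
    nlinarith [sin_sq_add_cos_sq β]
  have hquot : 1 < cos β / (R * A) := (one_lt_div (by positivity)).2 hRA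
  rw [div_mul_div_comm, one_mul, mul_comm A R]
  linarith

lemma arctan_le_arcsin_of_sq_le {x R : ℝ} (hx : 0 ≤ x) (hR : 0 ≤ R)
    (h : (1 - R ^ 2) * x ^ 2 ≤ R ^ 2) : arctan x ≤ arcsin R := by
  rw [le_arcsin_iff_sin_le' ⟨neg_pi_div_two_lt_arctan x, (arctan_lt_pi_div_two x).le⟩,
    sin_arctan, div_le_iff₀ (by positivity), ← sqrt_sq hR, ← sqrt_mul (sq_nonneg R),
    le_sqrt hx (by positivity)]
  linarith

lemma integral_lt_integral_of_forall_lt {α : Type*} [MeasurableSpace α] {μ : Measure α}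
    [NeZero μ] {f g : α → ℝ} (hf : Integrable f μ) (hg : Integrable g μ)
    (hfg : ∀ x, f x < g x) : ∫ x, f x ∂μ < ∫ x, g x ∂μ := by
  have hsupport : Function.support (fun x => g x - f x) = univ :=
    eq_univ_of_forall fun x => sub_ne_zero.2 (hfg x).ne'
  have hpos : 0 < ∫ x, (g x - f x) ∂μ := by
    refine (integral_pos_iff_support_of_nonneg (f := fun x => g x - f x)
      (fun x => sub_nonneg.2 (hfg x).le) (hg.sub hf)).2 ?_
    rw [hsupport]
    exact Measure.measure_univ_pos.2 (NeZero.ne μ)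
  rw [integral_sub hg hf] at hpos
  linarith

/-- The mean rotation number `α` depends strictly monotonically (decreasing)
on the full energy `F`. -/
theorem rotation_number_strict_anti (R : ℝ) (hR0 : 0 < R) (hR1 : R < 1)
    (z g : AddCircle (1 : ℝ) → ℝ) (hz : Continuous z) (hg : Continuous g)
    (hzpos : ∀ s, 0 < z s) (F₀ : ℝ)
    (hF₀ : ∀ s, ((1 - R ^ 2) / R ^ 2) * z s ^ 2 < F₀ - g s) :
    StrictAntiOn (fun F : ℝ => 2 * ∫ s : AddCircle (1 : ℝ),
        (Real.arcsin (Real.sin (Real.arctan (z s / Real.sqrt (F - g s))) / R) -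
          Real.arctan (z s / Real.sqrt (F - g s))))
      (Set.Ici F₀) := by
  have hw : ∀ F ∈ Ici F₀, ∀ s, 0 < F - g s := fun F hF s => by
    have : 0 ≤ (1 - R ^ 2) / R ^ 2 * z s ^ 2 :=
      mul_nonneg (div_nonneg (by nlinarith) (sq_nonneg R)) (sq_nonneg _)
    linarith [hF₀ s, mem_Ici.1 hF]
  have hangle : ∀ F ∈ Ici F₀, ∀ s, arctan (z s / √(F - g s)) ∈ Icc 0 (arcsin R) := by
    intro F hF s
    have hzs := (hzpos s).le
    refine ⟨arctan_nonneg.2 (by positivity), arctan_le_arcsin_of_sq_le (by positivity) hR0.le ?_⟩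
    -- the alternating condition `z² < (R² / (1 - R²)) w²`
    have hcond := hF₀ s
    rw [div_mul_eq_mul_div, div_lt_iff₀ (by positivity)] at hcond
    rw [div_pow, sq_sqrt (hw F hF s).le, ← mul_div_assoc, div_le_iff₀ (hw F hF s)]
    nlinarith [mem_Ici.1 hF]
  have hint : ∀ F ∈ Ici F₀, Integrable fun s => betaHat R (arctan (z s / √(F - g s))) :=
    fun F hF => Continuous.integrable_of_hasCompactSupport
      ((continuous_betaHat R).comp <| continuous_arctan.comp <|
        hz.div (continuous_const.sub hg).sqrt fun s => (sqrt_pos.2 (hw F hF s)).ne')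
      (HasCompactSupport.of_compactSpace _)
  intro F₁ hF₁ F₂ hF₂ hlt
  refine mul_lt_mul_of_pos_left
    (integral_lt_integral_of_forall_lt (hint F₂ hF₂) (hint F₁ hF₁) fun s => ?_) two_pos
  refine strictMonoOn_betaHat hR0 hR1 (hangle F₂ hF₂ s) (hangle F₁ hF₁ s) (arctan_strictMono ?_)
  exact div_lt_div_of_pos_left (hzpos s) (sqrt_pos.2 (hw F₁ hF₁ s))
    (sqrt_lt_sqrt (hw F₁ hF₁ s).le (by linarith))
end

section
/- For the two-particle system with one rotating scatterer, the angle γ/2 between the two reflection axes on the velocity circle satisfies cos(γ/2) = 1/(1+η). Precisely: for η > 0, the vectors u = (1, −(1+η), √η) and v = (−(1+η), 1, √η) in ℝ³ satisfy |⟪u, v⟫| / (‖u‖·‖v‖) = 1/(1+η), where ⟪·,·⟫ is the standard inner product and ‖·‖ the Euclidean norm. -/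
open RealInnerProductSpace

namespace EuclideanSpace

theorem inner_fin_three (x y : EuclideanSpace ℝ (Fin 3)) :
    ⟪x, y⟫ = x 0 * y 0 + x 1 * y 1 + x 2 * y 2 := by
  simp only [PiLp.inner_apply, Fin.sum_univ_three, RCLike.inner_apply, conj_trivial]
  ring

theorem norm_sq_fin_three (x : EuclideanSpace ℝ (Fin 3)) :
    ‖x‖ ^ 2 = x 0 ^ 2 + x 1 ^ 2 + x 2 ^ 2 := by
  simp only [norm_sq_eq, Fin.sum_univ_three, Real.norm_eq_abs, sq_abs]

end EuclideanSpace

/-- For the two-particle system with one rotating scatterer, the angle `γ/2`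
between the two reflection axes on the velocity circle satisfies
`cos (γ/2) = 1/(1+η)`. -/
theorem two_particle_angle (η : ℝ) (hη : 0 < η)
    (u v : EuclideanSpace ℝ (Fin 3))
    (hu : u = ![1, -(1 + η), Real.sqrt η])
    (hv : v = ![-(1 + η), 1, Real.sqrt η]) :
    |⟪u, v⟫| / (‖u‖ * ‖v‖) = 1 / (1 + η) := by
  have hsqrt : Real.sqrt η ^ 2 = η := Real.sq_sqrt hη.le
  have hinner : ⟪u, v⟫ = -(η + 2) := by
    rw [EuclideanSpace.inner_fin_three, hu, hv]
    dsimp only [Matrix.cons_val]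
    linear_combination hsqrt
  have hnorm_u : ‖u‖ ^ 2 = (1 + η) * (η + 2) := by
    rw [EuclideanSpace.norm_sq_fin_three, hu]
    dsimp only [Matrix.cons_val]
    linear_combination hsqrt
  have hnorm_v : ‖v‖ ^ 2 = (1 + η) * (η + 2) := by
    rw [EuclideanSpace.norm_sq_fin_three, hv]
    dsimp only [Matrix.cons_val]
    linear_combination hsqrt
  have hnorm_eq : ‖u‖ = ‖v‖ :=
    (pow_left_inj₀ (norm_nonneg u) (norm_nonneg v) two_ne_zero).mp (hnorm_u.trans hnorm_v.symm)
  rw [hinner, ← hnorm_eq, ← sq, hnorm_u, abs_neg, abs_of_pos (by linarith)]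
  field_simp
end
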